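/- arXiv:1310.1012 — 2 statements merged into one kernel-verified Lean document; each statement's English description precedes it below -/
import Mathlib

section
/- If U and V are two crossing involution modules of a symmetric 2-structure G, then the symmetric difference U △ V is also an involution module of G. -/
/-- Two subsets `A`, `B` of `X` are *crossing* if `A ∩ B`, `A \ B`, `B \ A` are all
nonempty and `A ∪ B ≠ X`. -/
def Crossing {X : Type*} (A B : Set X) : Prop :=
  (A ∩ B).Nonempty ∧ (A \ B).Nonempty ∧ (B \ A).Nonempty ∧ A ∪ B ≠ Set.univ

/-- `U` is an involution module of the symmetric 2-structure `(X, E)` w.r.t. the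
involution `I` of the colors: any two elements of `U` have identical or `I`-swapped
colored neighborhoods outside `U`. -/
def IsInvolutionModule {X : Type*} (E : X → X → ℕ) (I : ℕ → ℕ) (U : Set X) : Prop :=
  ∀ u ∈ U, ∀ v ∈ U,
    (∀ i : ℕ, {x | x ∉ U ∧ E u x = i} = {x | x ∉ U ∧ E v x = i}) ∨
    (∀ i : ℕ, {x | x ∉ U ∧ E u x = i} = {x | x ∉ U ∧ E v x = I i})

/-!
Say that `v` is twisted `n` times from `u` outside `U` if `E v x = I^[n] (E u x)` for all
`x ∉ U`; an involution module is a set whose points are pairwise twisted outside it. As `I` has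
no fixed point, a single vertex determines the parity of a twist, and as `E` is symmetric, a
twist along `U` commutes with a twist along `V` when read across the two sets. For
`u, v ∈ U \ V`, their twist along `U` persists at each `x ∈ U ∩ V`: compare `x` with a vertex
of `V \ U`. For `u ∈ U \ V` and `v ∈ V \ U`, compose the twists through some `w ∈ U ∩ V`; at
`x ∈ U ∩ V`, the twists of `w, x` along `U` and along `V` agree, as both are read off at a
vertex outside `U ∪ V`.
-/

open Function Set

lemma Function.Involutive.iterate_eq_of_iterate_apply_eq {α : Type*} {f : α → α}
    (hf : Involutive f) (hfpf : ∀ a, f a ≠ a) {m n : ℕ} {a : α} (h : f^[m] a = f^[n] a) :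
    f^[m] = f^[n] := by
  rcases Nat.even_or_odd m with hm | hm <;> rcases Nat.even_or_odd n with hn | hn <;>
    simp only [hf.iterate_even, hf.iterate_odd, hm, hn, id] at h ⊢
  exacts [absurd h.symm (hfpf a), absurd h (hfpf a)]

lemma Set.mem_inter_or_notMem_union_of_notMem_symmDiff {α : Type*} {s t : Set α} {a : α}
    (h : a ∉ symmDiff s t) : a ∈ s ∩ t ∨ a ∉ s ∪ t := by
  simp only [mem_symmDiff, mem_inter_iff, mem_union] at h ⊢
  tauto

section

variable {X C : Type*} {E : X → X → C} {I : C → C}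

def TwistedOutside (E : X → X → C) (I : C → C) (U : Set X) (n : ℕ) (u v : X) : Prop :=
  ∀ x ∉ U, E v x = I^[n] (E u x)

lemma colourClasses_eq_iff_twistedOutside (hI : Injective I) {U : Set X} {n : ℕ} {u v : X} :
    (∀ i, {x | x ∉ U ∧ E u x = i} = {x | x ∉ U ∧ E v x = I^[n] i}) ↔
      TwistedOutside E I U n u v := by
  constructor
  · intro h x hx
    have hx' : x ∈ {z | z ∉ U ∧ E u z = E u x} := ⟨hx, rfl⟩
    rw [h] at hx'
    exact hx'.2
  · intro h i
    ext x
    exact and_congr_right fun hx ↦ by rw [h x hx, (hI.iterate n).eq_iff]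

lemma isInvolutionModule_iff {E : X → X → ℕ} {I : ℕ → ℕ} (hI : Involutive I) {U : Set X} :
    IsInvolutionModule E I U ↔ ∀ u ∈ U, ∀ v ∈ U, ∃ n, TwistedOutside E I U n u v := by
  refine forall₂_congr fun u _ ↦ forall₂_congr fun v _ ↦ ?_
  have h (n : ℕ) :=
    colourClasses_eq_iff_twistedOutside (E := E) (U := U) (n := n) (u := u) (v := v) hI.injective
  constructor
  · rintro (huv | huv)
    exacts [⟨0, (h 0).1 huv⟩, ⟨1, (h 1).1 huv⟩]
  · rintro ⟨n, huv⟩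
    rcases Nat.even_or_odd n with hn | hn
    · exact .inl fun i ↦ by simpa only [hI.iterate_even hn, id] using (h n).2 huv i
    · exact .inr fun i ↦ by simpa only [hI.iterate_odd hn] using (h n).2 huv i

namespace TwistedOutside

variable {U V : Set X} {m n : ℕ} {u v w : X}

lemma symm (hI : Involutive I) (h : TwistedOutside E I U n u v) : TwistedOutside E I U n v u :=
  fun x hx ↦ by rw [h x hx, ← iterate_add_apply, ← two_mul, hI.iterate_two_mul, id]

lemma trans (huv : TwistedOutside E I U m u v) (hvw : TwistedOutside E I U n v w) :
    TwistedOutside E I U (n + m) u w :=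
  fun x hx ↦ by rw [hvw x hx, huv x hx, iterate_add_apply]

lemma mono (h : TwistedOutside E I U n u v) (hUV : U ⊆ V) : TwistedOutside E I V n u v :=
  fun x hx ↦ h x fun hxU ↦ hx (hUV hxU)

lemma inter (hI : Involutive I) (hfpf : ∀ c, I c ≠ c) {y : X} (hU : TwistedOutside E I U m u v)
    (hV : TwistedOutside E I V n u v) (hy : y ∉ U ∪ V) : TwistedOutside E I (U ∩ V) m u v := by
  have hmn : I^[m] = I^[n] :=
    hI.iterate_eq_of_iterate_apply_eq hfpf <| by
      rw [← hU y fun h ↦ hy (.inl h), ← hV y fun h ↦ hy (.inr h)]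
  intro x hx
  rcases not_and_or.1 hx with hxU | hxV
  exacts [hU x hxU, by rw [hmn]; exact hV x hxV]

lemma apply_eq_of_twistedOutside (hsymm : ∀ x y, E x y = E y x) {x y : X}
    (huv : TwistedOutside E I U m u v) (hyx : TwistedOutside E I V n y x)
    (hu : u ∉ V) (hv : v ∉ V) (hy : y ∉ U) : E v x = I^[m] (E u x) :=
  calc E v x = E x v := hsymm v x
    _ = I^[n] (I^[m] (E u y)) := by rw [hyx v hv, hsymm y v, huv y hy]
    _ = I^[m] (I^[n] (E y u)) := by
      rw [hsymm u y, ← iterate_add_apply, add_comm, iterate_add_apply]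
    _ = I^[m] (E u x) := by rw [← hyx u hu, hsymm x u]

end TwistedOutside

section SymmDiff

variable (hsymm : ∀ x y, E x y = E y x) {U V : Set X}
  (hU : ∀ u ∈ U, ∀ v ∈ U, ∃ n, TwistedOutside E I U n u v)
  (hV : ∀ u ∈ V, ∀ v ∈ V, ∃ n, TwistedOutside E I V n u v)
include hsymm hU hV

lemma exists_twistedOutside_symmDiff_of_mem_diff {y u v : X} (hy : y ∈ V \ U) (hu : u ∈ U \ V)
    (hv : v ∈ U \ V) : ∃ n, TwistedOutside E I (symmDiff U V) n u v := by
  obtain ⟨n, huv⟩ := hU u hu.1 v hv.1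
  refine ⟨n, fun x hx ↦ ?_⟩
  rcases mem_inter_or_notMem_union_of_notMem_symmDiff hx with hx | hx
  · obtain ⟨t, hyx⟩ := hV y hy.1 x hx.2
    exact huv.apply_eq_of_twistedOutside hsymm hyx hu.2 hv.2 hy.2
  · exact huv x fun hxU ↦ hx (.inl hxU)

lemma exists_twistedOutside_symmDiff_of_mem_diff_of_mem_diff (hI : Involutive I)
    (hfpf : ∀ c, I c ≠ c) {w y u v : X} (hw : w ∈ U ∩ V) (hy : y ∉ U ∪ V) (hu : u ∈ U \ V)
    (hv : v ∈ V \ U) : ∃ n, TwistedOutside E I (symmDiff U V) n u v := by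
  obtain ⟨m, huw⟩ := hU u hu.1 w hw.1
  obtain ⟨n, hwv⟩ := hV w hw.2 v hv.1
  refine ⟨n + m, fun x hx ↦ ?_⟩
  rcases mem_inter_or_notMem_union_of_notMem_symmDiff hx with hx | hx
  · obtain ⟨r, hwxU⟩ := hU w hw.1 x hx.1
    obtain ⟨t, hwxV⟩ := hV w hw.2 x hx.2
    have hwx := hwxU.inter hI hfpf hwxV hy
    have hwv' : E w v = I^[n + m] (E w u) := by
      rw [huw v hv.2, hsymm u v, hwv u hu.2, ← iterate_add_apply, add_comm]
    calc E v x = I^[r] (E w v) := by rw [hsymm v x, hwx v fun h ↦ hv.2 h.1]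
      _ = I^[n + m] (I^[r] (E w u)) := by
        rw [hwv', ← iterate_add_apply, ← iterate_add_apply, add_comm]
      _ = I^[n + m] (E u x) := by rw [← hwx u fun h ↦ hu.2 h.2, hsymm x u]
  · exact (huw.mono subset_union_left).trans (hwv.mono subset_union_right) x hx

end SymmDiff

end

theorem symmDiff_of_crossing_involutionModules_general {X : Type*}
    (E : X → X → ℕ) (hsymm : ∀ x y, E x y = E y x)
    (I : ℕ → ℕ) (hinv : ∀ i, I (I i) = i) (hfpf : ∀ i, I i ≠ i)
    (U V : Set X) (hU : IsInvolutionModule E I U) (hV : IsInvolutionModule E I V)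
    (hcross : Crossing U V) :
    IsInvolutionModule E I (symmDiff U V) := by
  have hI : Involutive I := hinv
  rw [isInvolutionModule_iff hI] at hU hV ⊢
  obtain ⟨⟨w, hw⟩, ⟨a, ha⟩, ⟨b, hb⟩, hunion⟩ := hcross
  obtain ⟨y, hy⟩ := (ne_univ_iff_exists_notMem _).1 hunion
  intro u hu v hv
  rcases hu with hu | hu <;> rcases hv with hv | hv
  · exact exists_twistedOutside_symmDiff_of_mem_diff hsymm hU hV hb hu hv
  · exact exists_twistedOutside_symmDiff_of_mem_diff_of_mem_diff hsymm hU hV hI hfpf hw hy hu hv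
  · obtain ⟨n, h⟩ := exists_twistedOutside_symmDiff_of_mem_diff_of_mem_diff hsymm hU hV hI hfpf
      hw hy hv hu
    exact ⟨n, h.symm hI⟩
  · rw [symmDiff_comm]
    exact exists_twistedOutside_symmDiff_of_mem_diff hsymm hV hU ha hu hv

/-- If `U` and `V` are two crossing involution modules of a symmetric 2-structure `G`,
then the symmetric difference `U △ V` is also an involution module of `G`. -/
theorem symmDiff_of_crossing_involutionModules {X : Type*} [Fintype X]
    (E : X → X → ℕ) (hsymm : ∀ x y, E x y = E y x)
    (I : ℕ → ℕ) (hinv : ∀ i, I (I i) = i) (hfpf : ∀ i, I i ≠ i)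
    (U V : Set X) (hU : IsInvolutionModule E I U) (hV : IsInvolutionModule E I V)
    (hcross : Crossing U V) :
    IsInvolutionModule E I (symmDiff U V) :=
  symmDiff_of_crossing_involutionModules_general E hsymm I hinv hfpf U V hU hV hcross
end

section
/- Let G=(X,E) be a symmetric 2-structure, s ∈ X, and G' = G⊙_s. If U ⊂ X with s ∈ U and X∖U is an involution module of G, then X∖U is a module of G'. -/
/-- `M` is a module of a 2-structure with colors in `C`: all elements of `M` have
identical colored neighborhoods outside `M`. -/
def IsModuleG {X C : Type*} (E : X → X → C) (M : Set X) : Prop :=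
  ∀ m ∈ M, ∀ m' ∈ M, ∀ i : C, {x | x ∉ M ∧ E m x = i} = {x | x ∉ M ∧ E m' x = i}

/-- Canonical representative of the orbit of a triple of colors `(i, j, k)` under the
identifications `(i, j, k) ~ (I i, j, I k) ~ (i, I j, I k) ~ (I i, I j, k)`.  These are
exactly the identifications `Δ_{i,j} = Δ_{I(i),j}` (for triples of the form `(i,i,j)` or
`(i, I i, I j)`) and `Δ_{{i,j},k} = Δ_{{I(i),j},I(k)} = Δ_{{i,I(j)},I(k)} = Δ_{{I(i),I(j)},k}`
defining the fresh colors of the Switch Colors operator. -/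
def tripNorm (I : ℕ → ℕ) (t : ℕ × ℕ × ℕ) : ℕ × ℕ × ℕ :=
  let t1 := if t.1 ≤ I t.1 then t else (I t.1, t.2.1, I t.2.2)
  if t1.2.1 ≤ I t1.2.1 then t1 else (t1.1, I t1.2.1, I t1.2.2)

/-- The *Switch Colors* operator `⊙ : C³ → C'`, where the extended color set `C'` is
realized as `ℕ ⊕ (ℕ × ℕ × ℕ)`: old colors are `Sum.inl`-colors and the fresh colors `Δ`
are `Sum.inr` of canonical orbit representatives.  It satisfies `⊙(i,j,i) = j`,
`⊙(i,j,I(i)) = I(j)`, `⊙(i,i,j) = ⊙(i,I(i),I(j)) = Δ_{i,j} = Δ_{I(i),j}` for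
`j ∉ {i, I(i)}`, and `⊙(i,j,k) = Δ_{{i,j},k}` (fresh, with the prescribed
identifications) in the remaining cases. -/
def odot (I : ℕ → ℕ) (i j k : ℕ) : ℕ ⊕ (ℕ × ℕ × ℕ) :=
  if k = i then Sum.inl j
  else if k = I i then Sum.inl (I j)
  else Sum.inr (tripNorm I (i, j, k))

/-- The 2-structure `G ⊙_s` obtained from `G = (X, E)` by applying the Switch Colors
operator at the pivot `s`: its vertex set is `X \ {s}` and the color of an edge
`(u, v)` is `⊙(E(s,u), E(s,v), E(u,v))`. -/
def switchAt {X : Type*} (E : X → X → ℕ) (I : ℕ → ℕ) (s : X) :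
    {x : X // x ≠ s} → {x : X // x ≠ s} → ℕ ⊕ (ℕ × ℕ × ℕ) :=
  fun u v => odot I (E s u) (E s v) (E u v)

/-!
Two vertices `m, m'` of the involution module `X \ U` see every `y ∈ U`, in particular the pivot
`s`, either with the same colors or with colors swapped by `I`. In the first case the triples
`(E s m, E s y, E m y)` and `(E s m', E s y, E m' y)` coincide; in the second they differ by `I`
in the first and third entries, to which `⊙` is insensitive. So `m` and `m'` see each `y ∈ U`
with the same color in `G ⊙_s`.
-/

lemma tripNorm_involution_fst_trd {I : ℕ → ℕ} (hinv : Function.Involutive I) (hfpf : ∀ i, I i ≠ i)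
    (a b c : ℕ) : tripNorm I (I a, b, I c) = tripNorm I (a, b, c) := by
  rcases (hfpf a).lt_or_gt with h | h <;> simp [tripNorm, hinv _, h.le, not_le.mpr h]

lemma odot_involution_fst_trd {I : ℕ → ℕ} (hinv : Function.Involutive I) (hfpf : ∀ i, I i ≠ i)
    (a b c : ℕ) : odot I (I a) b (I c) = odot I a b c := by
  unfold odot
  by_cases hca : c = a
  · simp [hca]
  by_cases hcIa : c = I a
  · simp [hcIa, hinv a, hfpf a, (hfpf a).symm]
  have hIcIa : I c ≠ I a := hinv.injective.ne hca
  have hIcIIa : I c ≠ I (I a) := hinv.injective.ne hcIa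
  simp [hca, hcIa, hIcIa, hIcIIa, tripNorm_involution_fst_trd hinv hfpf]

lemma IsInvolutionModule.eq_or_eq_comp {X : Type*} {E : X → X → ℕ} {I : ℕ → ℕ} {M : Set X}
    (hM : IsInvolutionModule E I M) {u v : X} (hu : u ∈ M) (hv : v ∈ M) :
    (∀ y ∉ M, E u y = E v y) ∨ (∀ y ∉ M, E v y = I (E u y)) := by
  refine (hM u hu v hv).imp (fun h y hy => ?_) (fun h y hy => ?_)
  · exact ((Set.ext_iff.mp (h (E u y)) y).mp ⟨hy, rfl⟩).2.symm
  · exact ((Set.ext_iff.mp (h (E u y)) y).mp ⟨hy, rfl⟩).2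

lemma isModuleG_of_forall_eq {X C : Type*} {E : X → X → C} {M : Set X}
    (h : ∀ m ∈ M, ∀ m' ∈ M, ∀ x ∉ M, E m x = E m' x) : IsModuleG E M := by
  intro m hm m' hm' i
  ext x
  exact and_congr_right fun hx => by rw [h m hm m' hm' x hx]

theorem compl_module_of_compl_involutionModule_general {X : Type*}
    (E : X → X → ℕ) (hsymm : ∀ x y, E x y = E y x)
    (I : ℕ → ℕ) (hinv : ∀ i, I (I i) = i) (hfpf : ∀ i, I i ≠ i)
    (s : X) (U : Set X) (hsU : s ∈ U)
    (hU : IsInvolutionModule E I Uᶜ) :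
    IsModuleG (switchAt E I s) {x : {x : X // x ≠ s} | (x : X) ∉ U} := by
  refine isModuleG_of_forall_eq fun m hm m' hm' x hx => ?_
  have hxU : (x : X) ∉ Uᶜ := hx
  have hsU' : s ∉ Uᶜ := not_not_intro hsU
  unfold switchAt
  rw [hsymm s m, hsymm s m']
  rcases hU.eq_or_eq_comp hm hm' with same | swapped
  · rw [same s hsU', same x hxU]
  · rw [swapped s hsU', swapped x hxU, odot_involution_fst_trd hinv hfpf]

/-- If `U ⊂ X` contains the pivot `s` and `X \ U` is an involution module of `G`, then
`X \ U` is a module of `G ⊙_s`. -/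
theorem compl_module_of_compl_involutionModule {X : Type*} [Fintype X]
    (E : X → X → ℕ) (hsymm : ∀ x y, E x y = E y x)
    (I : ℕ → ℕ) (hinv : ∀ i, I (I i) = i) (hfpf : ∀ i, I i ≠ i)
    (s : X) (U : Set X) (hsU : s ∈ U) (hUne : U ≠ Set.univ)
    (hU : IsInvolutionModule E I Uᶜ) :
    IsModuleG (switchAt E I s) {x : {x : X // x ≠ s} | (x : X) ∉ U} :=
  compl_module_of_compl_involutionModule_general E hsymm I hinv hfpf s U hsU hU
end
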